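/- The segment {(x, −x) : x ∈ [−1, 1]} is contained in the boundary of the set E := ⋃_{x ∈ (−1,1)} Δ((x+1)/2, (1−x)/2) × Δ((1−x)/2, (1+x)/2) ⊂ ℂ². In particular E is not strictly convex. -/
import Mathlib


open Set Metric

/-- The union of products of discs. -/
def Eset : Set (ℂ × ℂ) :=
  ⋃ x ∈ Set.Ioo (-1:ℝ) 1,
    (ball (((x + 1) / 2 : ℝ) : ℂ) ((1 - x) / 2)) ×ˢ
      (ball (((1 - x) / 2 : ℝ) : ℂ) ((1 + x) / 2))

lemma Eset_open : IsOpen Eset :=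
  isOpen_biUnion fun _ _ => isOpen_ball.prod isOpen_ball

lemma not_mem_Eset (x : ℝ) : (((x:ℂ), ((-x:ℝ):ℂ)) : ℂ × ℂ) ∉ Eset := by
  simp only [Eset, mem_iUnion, mem_prod, mem_ball, exists_prop, mem_Ioo]
  rintro ⟨t, ⟨ht1, ht2⟩, h1, h2⟩
  rw [Complex.isometry_ofReal.dist_eq, Real.dist_eq, abs_lt] at h1 h2
  linarith [h1.1, h2.1]

lemma mem_closure_of_Ioo {x : ℝ} (hx : x ∈ Set.Ioo (-1:ℝ) 1) :
    (((x:ℂ), ((-x:ℝ):ℂ)) : ℂ × ℂ) ∈ closure Eset := by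
  obtain ⟨hx1, hx2⟩ := hx
  have hsub : (ball (((x + 1) / 2 : ℝ) : ℂ) ((1 - x) / 2)) ×ˢ
      (ball (((1 - x) / 2 : ℝ) : ℂ) ((1 + x) / 2)) ⊆ Eset := fun p hp =>
    mem_biUnion (mem_Ioo.mpr ⟨hx1, hx2⟩) hp
  refine closure_mono hsub ?_
  rw [closure_prod_eq, closure_ball _ (by linarith : (1-x)/2 ≠ 0),
      closure_ball _ (by linarith : (1+x)/2 ≠ 0)]
  refine ⟨?_, ?_⟩ <;>
    simp only [mem_closedBall, Complex.isometry_ofReal.dist_eq, Real.dist_eq] <;>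
    rw [abs_le] <;> constructor <;> linarith

lemma mem_closure_Eset {x : ℝ} (hx : x ∈ Set.Icc (-1:ℝ) 1) :
    (((x:ℂ), ((-x:ℝ):ℂ)) : ℂ × ℂ) ∈ closure Eset := by
  have hf : Continuous (fun s : ℝ => (((s:ℂ), ((-s:ℝ):ℂ)) : ℂ × ℂ)) := by
    push_cast
    fun_prop
  have h1 : (fun s : ℝ => (((s:ℂ), ((-s:ℝ):ℂ)) : ℂ × ℂ)) '' Set.Icc (-1:ℝ) 1
      ⊆ closure Eset := by
    have h0 : (fun s : ℝ => (((s:ℂ), ((-s:ℝ):ℂ)) : ℂ × ℂ)) '' Set.Ioo (-1:ℝ) 1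
        ⊆ closure Eset := by
      rintro _ ⟨s, hs, rfl⟩
      exact mem_closure_of_Ioo hs
    rw [← closure_Ioo (by norm_num : (-1:ℝ) ≠ 1)]
    exact (image_closure_subset_closure_image hf).trans
      ((closure_mono h0).trans closure_closure.subset)
  exact h1 ⟨x, hx, rfl⟩

lemma mem_frontier_Eset {x : ℝ} (hx : x ∈ Set.Icc (-1:ℝ) 1) :
    (((x:ℂ), ((-x:ℝ):ℂ)) : ℂ × ℂ) ∈ frontier Eset := by
  rw [Eset_open.frontier_eq]
  exact ⟨mem_closure_Eset hx, not_mem_Eset x⟩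

theorem stmt_17 :
    (∀ x ∈ Set.Icc (-1:ℝ) 1, (((x : ℂ), ((-x : ℝ) : ℂ)) : ℂ × ℂ) ∈ frontier Eset) ∧
      ∃ p q : ℂ × ℂ, p ≠ q ∧ segment ℝ p q ⊆ frontier Eset := by
  refine ⟨fun x hx => mem_frontier_Eset hx, ⟨(((-1:ℝ):ℂ), ((1:ℝ):ℂ)), (((1:ℝ):ℂ), ((-1:ℝ):ℂ)),
    ?_, ?_⟩⟩
  · intro h
    have := congrArg Prod.fst h
    simp at this
    norm_num at this
  · rintro p ⟨a, b, ha, hb, hab, rfl⟩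
    have key : (a • ((((-1:ℝ):ℂ), ((1:ℝ):ℂ)) : ℂ × ℂ) + b • (((1:ℝ):ℂ), ((-1:ℝ):ℂ)))
        = ((((b - a : ℝ):ℂ), ((-(b - a) : ℝ):ℂ)) : ℂ × ℂ) := by
      simp [Prod.ext_iff, Prod.smul_def]
      constructor <;> ring
    rw [key]
    exact mem_frontier_Eset ⟨by linarith, by linarith⟩
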